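/- arXiv:1906.08825 — 4 statements merged into one kernel-verified Lean document; each statement's English description precedes it below -/
import Mathlib

section
/- Let τ = (x_1,...,x_N) be a time series with pairwise distinct values, and suppose 1 ≤ i < j ≤ N with x_i and x_j horizontally visible (i.e., either j = i+1, or j > i+1 and x_k < min(x_i, x_j) for all i < k < j). Set a* = max{x_k : i < k < j} (taking a* = −∞ if j = i+1) and a_* = min(x_i, x_j). Then for every a with a* ≤ a < a_*, the set {i, i+1, ..., j−1} is an a-connected component of the weighted path τ̌. -/
/-- One step along the weighted path of the time series `(x 1, ..., x N)`:
vertices `0, ..., N`, with the edge joining `k-1` and `k` carrying weight `x k`,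
usable at threshold `a` when its weight is at most `a`. -/
def pathStep (N : ℕ) (x : ℕ → ℝ) (a : ℝ) (u v : ℕ) : Prop :=
  (v = u + 1 ∧ v ≤ N ∧ x v ≤ a) ∨ (u = v + 1 ∧ u ≤ N ∧ x u ≤ a)

/-- `a`-connectivity on the weighted path: joined by a path all of whose edge
weights are at most `a`. -/
def aConnPath (N : ℕ) (x : ℕ → ℝ) (a : ℝ) : ℕ → ℕ → Prop :=
  Relation.ReflTransGen (pathStep N x a)

/-- If `x i` and `x j` are horizontally visible and `a* ≤ a < a_*` (all interior values
are `≤ a` and `a < min (x i) (x j)`), then `{i, ..., j-1}` is exactly the `a`-connected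
component of the vertex `i` in the weighted path. -/
theorem component_of_visible (N : ℕ) (x : ℕ → ℝ)
    (hdist : Set.InjOn x (Set.Icc 1 N))
    (i j : ℕ) (hi : 1 ≤ i) (hij : i < j) (hj : j ≤ N)
    (hvis : ∀ k, i < k → k < j → x k < min (x i) (x j))
    (a : ℝ)
    (ha1 : ∀ k, i < k → k < j → x k ≤ a)
    (ha2 : a < min (x i) (x j)) :
    ∀ u, aConnPath N x a i u ↔ (i ≤ u ∧ u < j) := by
  have hxi : a < x i := lt_of_lt_of_le ha2 (min_le_left _ _)
  have hxj : a < x j := lt_of_lt_of_le ha2 (min_le_right _ _)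
  intro u
  constructor
  · intro h
    induction h with
    | refl => exact ⟨le_refl i, hij⟩
    | @tail b c hpath hstep ih =>
      obtain ⟨hib, hbj⟩ := ih
      rcases hstep with ⟨h1, h2, h3⟩ | ⟨h1, h2, h3⟩
      · have hne : c ≠ j := fun hc => absurd h3 (not_le_of_gt (hc ▸ hxj))
        omega
      · have hne : b ≠ i := fun hc => absurd h3 (not_le_of_gt (hc ▸ hxi))
        omega
  · rintro ⟨hiu, huj⟩
    clear hdist hvis
    induction u with
    | zero => omega
    | succ n ih =>
      rcases Nat.lt_or_ge i (n+1) with h | h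
      · have hn : i ≤ n := by omega
        exact (ih hn (by omega)).tail (Or.inl ⟨rfl, by omega, ha1 _ h huj⟩)
      · have : i = n + 1 := by omega
        subst this
        exact Relation.ReflTransGen.refl
end

section
/- Let τ = (x_1,...,x_N) be a time series with pairwise distinct positive values and let 1 ≤ i < j ≤ N. If there exists a ∈ ℝ such that {i, i+1, ..., j−1} is an a-connected component of the weighted path τ̌ (i.e., it is a-connected and maximal), then x_i and x_j are horizontally visible in τ: x_k < min(x_i, x_j) for all i < k < j. -/
lemma weight_le_of_conn (N : ℕ) (x : ℕ → ℝ) (a : ℝ) (i : ℕ) :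
    ∀ u, aConnPath N x a i u → ∀ k, i < k → k ≤ u → x k ≤ a := by
  intro u h
  induction h with
  | refl => intro k hk1 hk2; omega
  | tail hwu step ih =>
    rename_i w
    intro k hk1 hk2
    rcases step with ⟨hv, _, hxa⟩ | ⟨hw, _, hxa⟩
    · rcases eq_or_lt_of_le hk2 with h | h
      · subst h; exact hxa
      · exact ih k hk1 (by omega)
    · exact ih k hk1 (by omega)

/-- If for some threshold `a` the set `{i, ..., j-1}` is exactly the `a`-connected
component of vertex `i` in the weighted path, then `x i` and `x j` are horizontally
visible. -/
theorem visible_of_component (N : ℕ) (x : ℕ → ℝ)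
    (hpos : ∀ k, 1 ≤ k → k ≤ N → 0 < x k)
    (hdist : Set.InjOn x (Set.Icc 1 N))
    (i j : ℕ) (hi : 1 ≤ i) (hij : i < j) (hj : j ≤ N)
    (a : ℝ)
    (hcomp : ∀ u, aConnPath N x a i u ↔ (i ≤ u ∧ u < j)) :
    ∀ k, i < k → k < j → x k < min (x i) (x j) := by
  have hxi : a < x i := by
    by_contra h
    push_neg at h
    have hstep : pathStep N x a i (i - 1) := Or.inr ⟨by omega, by omega, h⟩
    have := (hcomp (i - 1)).1 (Relation.ReflTransGen.single hstep)
    omega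
  have hxj : a < x j := by
    by_contra h
    push_neg at h
    have h1 : aConnPath N x a i (j - 1) := (hcomp (j - 1)).2 ⟨by omega, by omega⟩
    have hstep : pathStep N x a (j - 1) j := Or.inl ⟨by omega, hj, h⟩
    have := (hcomp j).1 (h1.tail hstep)
    omega
  intro k hk1 hk2
  have hconn : aConnPath N x a i k := (hcomp k).2 ⟨by omega, hk2⟩
  have hk : x k ≤ a := weight_le_of_conn N x a i k hconn k hk1 le_rfl
  exact lt_min (lt_of_le_of_lt hk hxi) (lt_of_le_of_lt hk hxj)
end

section
/- The horizontal visibility graph of a time series of length N ≥ 2 with pairwise distinct values has at most 2N − 3 edges, and this bound is attained. -/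
/-- Horizontal visibility between (1-based) indices `i < j` of a time series `x`. -/
def vis (x : ℕ → ℝ) (i j : ℕ) : Prop :=
  i < j ∧ ∀ k, i < k → k < j → x k < min (x i) (x j)

/-- The horizontal visibility graph of the time series `(x 1, ..., x N)`. -/
def hvg (N : ℕ) (x : ℕ → ℝ) : SimpleGraph (Fin N) where
  Adj i j := vis x (i.1 + 1) (j.1 + 1) ∨ vis x (j.1 + 1) (i.1 + 1)
  symm := ⟨fun _ _ h => Or.symm h⟩
  loopless := ⟨fun i h => by rcases h with ⟨h, _⟩ | ⟨h, _⟩ <;> exact lt_irrefl _ h⟩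

lemma adj_vis {N : ℕ} {x : ℕ → ℝ} {a b : Fin N} (h : (hvg N x).Adj a b) (hab : a < b) :
    vis x (a.1 + 1) (b.1 + 1) := by
  have hab' : a.1 < b.1 := hab
  rcases h with h | h
  · exact h
  · exact absurd h.1 (by omega)

lemma edgeSet_eq_image {N : ℕ} (G : SimpleGraph (Fin N)) :
    G.edgeSet = Sym2.mk.uncurry '' {p : Fin N × Fin N | p.1 < p.2 ∧ G.Adj p.1 p.2} := by
  ext e
  induction e using Sym2.ind with
  | _ a b =>
    simp only [SimpleGraph.mem_edgeSet, Set.mem_image, Set.mem_setOf_eq]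
    constructor
    · intro h
      rcases lt_trichotomy a b with hl | he | hg
      · exact ⟨(a, b), ⟨hl, h⟩, rfl⟩
      · exact absurd (he ▸ h) (G.loopless.irrefl a)
      · exact ⟨(b, a), ⟨hg, h.symm⟩, Sym2.eq_swap⟩
    · rintro ⟨⟨c, d⟩, ⟨-, hadj⟩, heq⟩
      simp only [Function.uncurry_apply_pair] at heq
      rw [Sym2.eq_iff] at heq
      rcases heq with ⟨rfl, rfl⟩ | ⟨rfl, rfl⟩
      · exact hadj
      · exact hadj.symm

lemma injOn_mk {N : ℕ} (S : Set (Fin N × Fin N)) (hS : ∀ p ∈ S, p.1 < p.2) :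
    Set.InjOn Sym2.mk.uncurry S := by
  rintro ⟨a, b⟩ h ⟨c, d⟩ h' heq
  have h1 := hS _ h
  have h2 := hS _ h'
  simp only [Function.uncurry_apply_pair] at heq
  rw [Sym2.eq_iff] at heq
  rcases heq with ⟨rfl, rfl⟩ | ⟨rfl, rfl⟩
  · rfl
  · exact absurd (h1.trans h2) (lt_irrefl _)

noncomputable def tagm (x : ℕ → ℝ) (i j : ℕ) : ℕ :=
  if h : (Finset.Ioo i j).Nonempty then
    (Finset.exists_max_image (Finset.Ioo i j) x h).choose
  else 0

lemma tagm_spec {x : ℕ → ℝ} {i j : ℕ} (h : (Finset.Ioo i j).Nonempty) :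
    tagm x i j ∈ Finset.Ioo i j ∧ ∀ k ∈ Finset.Ioo i j, x k ≤ x (tagm x i j) := by
  rw [tagm, dif_pos h]
  obtain ⟨hm, hmax⟩ := (Finset.exists_max_image (Finset.Ioo i j) x h).choose_spec
  exact ⟨hm, hmax⟩

lemma hvg_upper (N : ℕ) (hN : 2 ≤ N) (x : ℕ → ℝ) :
    (hvg N x).edgeSet.ncard ≤ 2 * N - 3 := by
  classical
  set P := {p : Fin N × Fin N | p.1 < p.2 ∧ (hvg N x).Adj p.1 p.2} with hP
  have hPlt : ∀ p ∈ P, p.1 < p.2 := fun p hp => hp.1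
  rw [edgeSet_eq_image, Set.ncard_image_of_injOn (injOn_mk P hPlt)]
  set T : Finset ℕ := Finset.Icc 1 (N - 1) ∪ Finset.Icc (N + 1) (2 * N - 2) with hTdef
  have hTcard : T.card = 2 * N - 3 := by
    rw [hTdef, Finset.card_union_of_disjoint, Nat.card_Icc, Nat.card_Icc]
    · omega
    · rw [Finset.disjoint_left]
      intro a ha hb
      simp only [Finset.mem_Icc] at ha hb
      omega
  set f : Fin N × Fin N → ℕ := fun p =>
    if p.2.1 = p.1.1 + 1 then p.1.1 + 1 else N - 1 + tagm x (p.1.1 + 1) (p.2.1 + 1) with hf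
  -- basic facts about edges
  have hvisP : ∀ p : Fin N × Fin N, p ∈ P → vis x (p.1.1 + 1) (p.2.1 + 1) :=
    fun p hp => adj_vis hp.2 hp.1
  have hmspec : ∀ p : Fin N × Fin N, p ∈ P → p.2.1 ≠ p.1.1 + 1 →
      tagm x (p.1.1 + 1) (p.2.1 + 1) ∈ Finset.Ioo (p.1.1 + 1) (p.2.1 + 1) ∧
      ∀ k ∈ Finset.Ioo (p.1.1 + 1) (p.2.1 + 1), x k ≤ x (tagm x (p.1.1 + 1) (p.2.1 + 1)) := by
    intro p hp hne
    have hlt : p.1.1 < p.2.1 := hp.1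
    exact tagm_spec ⟨p.1.1 + 2, Finset.mem_Ioo.2 (by omega)⟩
  have hmaps : ∀ p ∈ P, f p ∈ (T : Set ℕ) := by
    intro p hp
    have hlt : p.1.1 < p.2.1 := hp.1
    have hb : p.2.1 < N := p.2.2
    simp only [hf, hTdef, Finset.coe_union, Set.mem_union, Finset.mem_coe, Finset.mem_Icc]
    by_cases hc : p.2.1 = p.1.1 + 1
    · rw [if_pos hc]
      left
      omega
    · rw [if_neg hc]
      right
      have := (hmspec p hp hc).1
      rw [Finset.mem_Ioo] at this
      omega
  have hinj : Set.InjOn f P := by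
    have hkey : ∀ m i j i' j' : ℕ, vis x i' j' → (∀ k ∈ Finset.Ioo i j, x k ≤ x m) →
        i < m → m < j → i' < m → m < j' → ¬ i < i' := by
      intro m i j i' j' h2 hmax him hmj hi'm hmj' hlt
      have h1 : x i' ≤ x m := hmax i' (Finset.mem_Ioo.2 ⟨hlt, lt_trans hi'm hmj⟩)
      have h2m : x m < min (x i') (x j') := h2.2 m hi'm hmj'
      have : x m < x i' := lt_of_lt_of_le h2m (min_le_left _ _)
      linarith
    have hkeyj : ∀ m i j i' j' : ℕ, vis x i' j' → (∀ k ∈ Finset.Ioo i j, x k ≤ x m) →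
        i < m → m < j → i' < m → m < j' → ¬ j' < j := by
      intro m i j i' j' h2 hmax him hmj hi'm hmj' hlt
      have h1 : x j' ≤ x m := hmax j' (Finset.mem_Ioo.2 ⟨lt_trans him hmj', hlt⟩)
      have h2m : x m < min (x i') (x j') := h2.2 m hi'm hmj'
      have : x m < x j' := lt_of_lt_of_le h2m (min_le_right _ _)
      linarith
    rintro ⟨a, b⟩ hp ⟨c, d⟩ hq heq
    have hab : a.1 < b.1 := hp.1
    have hcd : c.1 < d.1 := hq.1
    have hbN : b.1 < N := b.2
    have hdN : d.1 < N := d.2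
    simp only [hf] at heq
    by_cases h1 : b.1 = a.1 + 1 <;> by_cases h2 : d.1 = c.1 + 1
    · rw [if_pos h1, if_pos h2] at heq
      have hac : a = c := Fin.ext (by omega)
      have hbd : b = d := Fin.ext (by omega)
      rw [hac, hbd]
    · rw [if_pos h1, if_neg h2] at heq
      have hm := (hmspec (c, d) hq h2).1
      rw [Finset.mem_Ioo] at hm
      dsimp only at heq hm
      omega
    · rw [if_neg h1, if_pos h2] at heq
      have hm := (hmspec (a, b) hp h1).1
      rw [Finset.mem_Ioo] at hm
      dsimp only at heq hm
      omega
    · rw [if_neg h1, if_neg h2] at heq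
      obtain ⟨hm1, hmax1⟩ := hmspec (a, b) hp h1
      obtain ⟨hm2, hmax2⟩ := hmspec (c, d) hq h2
      rw [Finset.mem_Ioo] at hm1 hm2
      dsimp only at heq hm1 hm2 hmax1 hmax2
      have hmm : tagm x (a.1 + 1) (b.1 + 1) = tagm x (c.1 + 1) (d.1 + 1) := by omega
      set m := tagm x (a.1 + 1) (b.1 + 1) with hmdef
      rw [← hmm] at hm2 hmax2
      have hv1 := hvisP (a, b) hp
      have hv2 := hvisP (c, d) hq
      have hi1 : ¬ a.1 + 1 < c.1 + 1 :=
        hkey m (a.1 + 1) (b.1 + 1) (c.1 + 1) (d.1 + 1) hv2 hmax1 hm1.1 hm1.2 hm2.1 hm2.2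
      have hi2 : ¬ c.1 + 1 < a.1 + 1 :=
        hkey m (c.1 + 1) (d.1 + 1) (a.1 + 1) (b.1 + 1) hv1 hmax2 hm2.1 hm2.2 hm1.1 hm1.2
      have hj1 : ¬ d.1 + 1 < b.1 + 1 :=
        hkeyj m (a.1 + 1) (b.1 + 1) (c.1 + 1) (d.1 + 1) hv2 hmax1 hm1.1 hm1.2 hm2.1 hm2.2
      have hj2 : ¬ b.1 + 1 < d.1 + 1 :=
        hkeyj m (c.1 + 1) (d.1 + 1) (a.1 + 1) (b.1 + 1) hv1 hmax2 hm2.1 hm2.2 hm1.1 hm1.2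
      have hac : a = c := Fin.ext (by omega)
      have hbd : b = d := Fin.ext (by omega)
      rw [hac, hbd]
  calc P.ncard ≤ (T : Set ℕ).ncard :=
        Set.ncard_le_ncard_of_injOn f hmaps hinj (T : Set ℕ).toFinite
    _ = 2 * N - 3 := by rw [Set.ncard_coe_finset]; exact hTcard

noncomputable def xex (N : ℕ) : ℕ → ℝ := fun k => if k = 1 then (N : ℝ) else (k : ℝ) - 1

lemma xex_injOn (N : ℕ) (hN : 2 ≤ N) : Set.InjOn (xex N) (Set.Icc 1 N) := by
  intro k hk l hl h
  simp only [Set.mem_Icc] at hk hl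
  by_cases hk1 : k = 1 <;> by_cases hl1 : l = 1
  · rw [hk1, hl1]
  · simp only [xex] at h
    rw [if_pos hk1, if_neg hl1] at h
    have : (l : ℝ) ≤ N := Nat.cast_le.2 hl.2
    have : (1 : ℝ) ≤ (N : ℝ) := by exact_mod_cast (by omega : 1 ≤ N)
    linarith
  · simp only [xex] at h
    rw [if_neg hk1, if_pos hl1] at h
    have : (k : ℝ) ≤ N := Nat.cast_le.2 hk.2
    have : (1 : ℝ) ≤ (N : ℝ) := by exact_mod_cast (by omega : 1 ≤ N)
    linarith
  · simp only [xex] at h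
    rw [if_neg hk1, if_neg hl1] at h
    have : (k : ℝ) = l := by linarith
    exact_mod_cast this

lemma xex_adj_iff (N : ℕ) (hN : 2 ≤ N) (a b : Fin N) (hab : a < b) :
    (hvg N (xex N)).Adj a b ↔ (a.1 = 0 ∨ b.1 = a.1 + 1) := by
  have hab' : a.1 < b.1 := hab
  have hbN : b.1 < N := b.2
  constructor
  · intro h
    by_contra hcon
    push_neg at hcon
    obtain ⟨ha0, hne⟩ := hcon
    have hv := adj_vis h hab
    have hk := hv.2 (a.1 + 2) (by omega) (by omega)
    have e1 : xex N (a.1 + 2) = (a.1 : ℝ) + 1 := by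
      simp only [xex]; rw [if_neg (by omega)]; push_cast; ring
    have e2 : xex N (a.1 + 1) = (a.1 : ℝ) := by
      simp only [xex]; rw [if_neg (by omega)]; push_cast; ring
    rw [e1, e2] at hk
    have := lt_of_lt_of_le hk (min_le_left _ _)
    linarith
  · intro h
    rcases h with ha0 | hcons
    · refine Or.inl ⟨by omega, fun k hk1 hk2 => ?_⟩
      have hk1' : 1 < k := by omega
      have e1 : xex N k = (k : ℝ) - 1 := by simp only [xex]; rw [if_neg (by omega)]
      have e2 : xex N (a.1 + 1) = (N : ℝ) := by simp only [xex]; rw [if_pos (by omega)]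
      have e3 : xex N (b.1 + 1) = (b.1 : ℝ) := by
        simp only [xex]; rw [if_neg (by omega)]; push_cast; ring
      rw [e1, e2, e3, lt_min_iff]
      have c1 : (k : ℝ) ≤ (b.1 : ℝ) := Nat.cast_le.2 (by omega)
      have c2 : (b.1 : ℝ) + 1 ≤ (N : ℝ) := by exact_mod_cast (by omega : b.1 + 1 ≤ N)
      constructor <;> linarith
    · exact Or.inl ⟨by omega, fun k hk1 hk2 => absurd hk1 (by omega)⟩


/-- The HVG of a time series of length `N ≥ 2` with pairwise distinct values has at most
`2N - 3` edges, and this bound is attained. -/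
theorem hvg_edge_bound (N : ℕ) (hN : 2 ≤ N) :
    (∀ x : ℕ → ℝ, Set.InjOn x (Set.Icc 1 N) →
        (hvg N x).edgeSet.ncard ≤ 2 * N - 3) ∧
      ∃ x : ℕ → ℝ, Set.InjOn x (Set.Icc 1 N) ∧
        (hvg N x).edgeSet.ncard = 2 * N - 3 := by
  classical
  constructor
  · intro x _
    exact hvg_upper N hN x
  · refine ⟨xex N, xex_injOn N hN, ?_⟩
    set P := {p : Fin N × Fin N | p.1 < p.2 ∧ (hvg N (xex N)).Adj p.1 p.2} with hPdef
    rw [edgeSet_eq_image, Set.ncard_image_of_injOn (injOn_mk P (fun p hp => hp.1))]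
    set F : Finset (Fin N × Fin N) :=
      Finset.univ.filter (fun p : Fin N × Fin N => p.1 < p.2 ∧ (p.1.1 = 0 ∨ p.2.1 = p.1.1 + 1))
      with hFdef
    have hPF : P = ↑F := by
      ext ⟨a, b⟩
      simp only [hPdef, Set.mem_setOf_eq, hFdef, Finset.coe_filter, Finset.mem_univ, true_and]
      constructor
      · rintro ⟨hab, hadj⟩
        exact ⟨hab, (xex_adj_iff N hN a b hab).1 hadj⟩
      · rintro ⟨hab, hor⟩
        exact ⟨hab, (xex_adj_iff N hN a b hab).2 hor⟩
    rw [hPF, Set.ncard_coe_finset]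
    have hN0 : 0 < N := by omega
    set T : Finset ℕ := Finset.Icc 1 (N - 1) ∪ Finset.Icc (N + 1) (2 * N - 2) with hTdef
    have hTcard : T.card = 2 * N - 3 := by
      rw [hTdef, Finset.card_union_of_disjoint, Nat.card_Icc, Nat.card_Icc]
      · omega
      · rw [Finset.disjoint_left]
        intro a ha hb
        simp only [Finset.mem_Icc] at ha hb
        omega
    have hcard : F.card = T.card := by
      apply Finset.card_nbij'
        (i := fun p : Fin N × Fin N => if p.1.1 = 0 then p.2.1 else N + p.1.1)
        (j := fun v => if v ≤ N - 1 then ((⟨0, hN0⟩ : Fin N), (⟨v % N, Nat.mod_lt _ hN0⟩ : Fin N))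
          else ((⟨(v - N) % N, Nat.mod_lt _ hN0⟩ : Fin N),
            (⟨(v - N + 1) % N, Nat.mod_lt _ hN0⟩ : Fin N)))
      · rintro ⟨a, b⟩ hp
        simp only [hFdef, Finset.mem_coe, Finset.mem_filter, Finset.mem_univ, true_and, Fin.lt_def] at hp
        have hbN : b.1 < N := b.2
        simp only [hTdef, Finset.mem_coe, Finset.mem_union, Finset.mem_Icc]
        by_cases ha : a.1 = 0
        · rw [if_pos ha]
          left
          omega
        · rw [if_neg ha]
          right
          omega
      · intro v hv
        simp only [hTdef, Finset.mem_coe, Finset.mem_union, Finset.mem_Icc] at hv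
        simp only [hFdef, Finset.mem_coe, Finset.mem_filter, Finset.mem_univ, true_and, Fin.lt_def]
        by_cases hvle : v ≤ N - 1
        · rw [if_pos hvle]
          have hvN : v % N = v := Nat.mod_eq_of_lt (by omega)
          refine ⟨by simp [hvN]; omega, Or.inl rfl⟩
        · rw [if_neg hvle]
          have e1 : (v - N) % N = v - N := Nat.mod_eq_of_lt (by omega)
          have e2 : (v - N + 1) % N = v - N + 1 := Nat.mod_eq_of_lt (by omega)
          dsimp only
          rw [e1, e2]
          refine ⟨by omega, Or.inr (by omega)⟩
      · rintro ⟨a, b⟩ hp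
        simp only [hFdef, Finset.mem_coe, Finset.mem_filter, Finset.mem_univ, true_and, Fin.lt_def] at hp
        have hbN : b.1 < N := b.2
        have haN : a.1 < N := a.2
        dsimp only
        by_cases ha : a.1 = 0
        · rw [if_pos ha, if_pos (by omega)]
          rw [Prod.mk.injEq]
          constructor
          · apply Fin.ext
            show (0 : ℕ) = a.1
            omega
          · exact Fin.ext (Nat.mod_eq_of_lt hbN)
        · rw [if_neg ha]
          have hb : b.1 = a.1 + 1 := by
            rcases hp.2 with h | h
            · exact absurd h ha
            · exact h
          rw [if_neg (by omega)]
          rw [Prod.mk.injEq]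
          constructor
          · apply Fin.ext
            show (N + a.1 - N) % N = a.1
            rw [Nat.add_sub_cancel_left]
            exact Nat.mod_eq_of_lt haN
          · apply Fin.ext
            show (N + a.1 - N + 1) % N = b.1
            rw [Nat.add_sub_cancel_left, Nat.mod_eq_of_lt (by omega)]
            omega
      · intro v hv
        simp only [hTdef, Finset.mem_coe, Finset.mem_union, Finset.mem_Icc] at hv
        beta_reduce
        by_cases hvle : v ≤ N - 1
        · rw [if_pos hvle]
          dsimp only
          rw [if_pos rfl]
          exact Nat.mod_eq_of_lt (by omega)
        · rw [if_neg hvle]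
          dsimp only
          have e1 : (v - N) % N = v - N := Nat.mod_eq_of_lt (by omega)
          rw [if_neg (by omega)]
          omega
    rw [hcard, hTcard]
end

section
/- Ordered (plane) rooted binary trees with n+1 leaves and unit edge lengths are uniquely determined by their sequence of consecutive leaf-to-leaf distances (d_{0,1}, d_{1,2}, ..., d_{n−1,n}): if two such trees have the same sequence of distances between order-consecutive leaves, they are isomorphic as ordered rooted trees. -/
/-- Ordered (plane) rooted binary trees: every internal vertex has exactly two ordered
children; all edges have length 1. -/
inductive BTree : Type
  | leaf : BTree
  | node : BTree → BTree → BTree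

/-- Depth of the leftmost leaf. -/
def BTree.ldepth : BTree → ℕ
  | .leaf => 0
  | .node l _ => l.ldepth + 1

/-- Depth of the rightmost leaf. -/
def BTree.rdepth : BTree → ℕ
  | .leaf => 0
  | .node _ r => r.rdepth + 1

/-- The list of graph distances `d_{0,1}, d_{1,2}, ..., d_{n-1,n}` between consecutive
leaves in the left-to-right plane order. -/
def BTree.dists : BTree → List ℕ
  | .leaf => []
  | .node l r => l.dists ++ [l.rdepth + r.ldepth + 2] ++ r.dists

/-!
Leaves `i` and `i + 1` are siblings exactly when `d_{i,i+1} = 2`, and every tree other than a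
single leaf has such a cherry. Sprouting a cherry at leaf `p` acts on the distance list by an
injective operation that depends only on `p`: insert a `2` at position `p` and increment its
two neighbours. So if two trees have the same distance list, both are obtained by sprouting at
the same leaf `p` from trees with a common, shorter, distance list, and induction on the number
of leaves concludes.
-/

/-- The distance list of `t.sprout p` in terms of `L = t.dists` (see `BTree.dists_sprout`);
junk for `p > L.length`. -/
def sproutDists : ℕ → List ℕ → List ℕ
  | 0, [] => [2]
  | 0, x :: L => 2 :: (x + 1) :: L
  | _ + 1, [] => []
  | p + 1, x :: L => (if p = 0 then x + 1 else x) :: sproutDists p L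

theorem sproutDists_injective (p : ℕ) : Function.Injective (sproutDists p) := by
  induction p with
  | zero => rintro (_ | ⟨x, L⟩) (_ | ⟨x', L'⟩) h <;> simp_all [sproutDists]
  | succ p ih =>
    rintro (_ | ⟨x, L⟩) (_ | ⟨x', L'⟩) h <;> simp only [sproutDists, reduceCtorEq] at h
    · rfl
    obtain ⟨hx, hL⟩ := List.cons.inj h
    congr 1
    · split_ifs at hx <;> omega
    · exact ih hL

theorem sproutDists_append_cons_of_le {p : ℕ} {A : List ℕ} (y : ℕ) (B : List ℕ)
    (hp : p ≤ A.length) :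
    sproutDists p (A ++ y :: B) =
      sproutDists p A ++ (if p = A.length then y + 1 else y) :: B := by
  induction p generalizing A with
  | zero => cases A <;> simp [sproutDists]
  | succ p ih =>
    obtain _ | ⟨a, A⟩ := A
    · simp at hp
    · simp [sproutDists, ih (Nat.le_of_succ_le_succ hp)]

theorem sproutDists_append_cons_of_lt {p : ℕ} {A : List ℕ} (y : ℕ) (B : List ℕ)
    (hp : A.length < p) :
    sproutDists p (A ++ y :: B) =
      A ++ (if p = A.length + 1 then y + 1 else y) :: sproutDists (p - A.length - 1) B := by
  induction A generalizing p with
  | nil =>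
    obtain _ | p := p
    · simp at hp
    · simp [sproutDists]
  | cons a A ih =>
    obtain _ | _ | p := p
    · simp at hp
    · simp at hp
    · simp only [List.length_cons, add_lt_add_iff_right] at hp
      simp [sproutDists, ih hp]

namespace BTree

def numLeaves : BTree → ℕ
  | .leaf => 1
  | .node l r => l.numLeaves + r.numLeaves

/-- Replace leaf number `p` by a cherry. -/
def sprout : BTree → ℕ → BTree
  | .leaf, _ => .node .leaf .leaf
  | .node l r, p =>
      if p < l.numLeaves then .node (l.sprout p) r
      else .node l (r.sprout (p - l.numLeaves))

theorem length_dists_add_one (t : BTree) : t.dists.length + 1 = t.numLeaves := by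
  induction t with
  | leaf => rfl
  | node l r ihl ihr => simp [dists, numLeaves]; omega

theorem numLeaves_sprout (t : BTree) (p : ℕ) : (t.sprout p).numLeaves = t.numLeaves + 1 := by
  induction t generalizing p with
  | leaf => rfl
  | node l r ihl ihr => unfold sprout; split_ifs <;> simp [numLeaves, ihl, ihr] <;> omega

theorem dists_eq_nil_iff {t : BTree} : t.dists = [] ↔ t = leaf := by
  cases t <;> simp [dists]

theorem two_mem_dists {t : BTree} (ht : t ≠ leaf) : 2 ∈ t.dists := by
  induction t with
  | leaf => exact absurd rfl ht
  | node l r ihl ihr =>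
    cases l with
    | node => exact List.mem_append_left _ (List.mem_append_left _ (ihl nofun))
    | leaf =>
      cases r with
      | leaf => simp [dists, ldepth, rdepth]
      | node => exact List.mem_append_right _ (ihr nofun)

theorem ldepth_sprout {t : BTree} {p : ℕ} (hp : p < t.numLeaves) :
    (t.sprout p).ldepth = t.ldepth + if p = 0 then 1 else 0 := by
  induction t generalizing p with
  | leaf => simp_all [numLeaves, sprout, ldepth]
  | node l r ihl ihr =>
    have := l.length_dists_add_one
    by_cases hl : p < l.numLeaves
    · rw [sprout, if_pos hl, ldepth, ldepth, ihl hl]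
      omega
    · rw [sprout, if_neg hl, ldepth, ldepth]
      split_ifs <;> omega

theorem rdepth_sprout {t : BTree} {p : ℕ} (hp : p < t.numLeaves) :
    (t.sprout p).rdepth = t.rdepth + if p + 1 = t.numLeaves then 1 else 0 := by
  induction t generalizing p with
  | leaf => simp_all [numLeaves, sprout, rdepth]
  | node l r ihl ihr =>
    have := r.length_dists_add_one
    have hnode : (node l r).numLeaves = l.numLeaves + r.numLeaves := rfl
    by_cases hl : p < l.numLeaves
    · rw [sprout, if_pos hl, rdepth, rdepth]
      split_ifs <;> omega
    · rw [sprout, if_neg hl, rdepth, rdepth, ihr (by omega)]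
      split_ifs <;> omega

theorem dists_sprout {t : BTree} {p : ℕ} (hp : p < t.numLeaves) :
    (t.sprout p).dists = sproutDists p t.dists := by
  induction t generalizing p with
  | leaf => simp_all [numLeaves, sprout, sproutDists, dists, ldepth, rdepth]
  | node l r ihl ihr =>
    have hl := l.length_dists_add_one
    simp only [numLeaves] at hp
    simp only [sprout, dists, List.append_assoc, List.singleton_append]
    split_ifs with hpl
    · rw [sproutDists_append_cons_of_le _ _ (by omega), dists, ihl hpl, rdepth_sprout hpl]
      simp only [List.append_assoc, List.singleton_append]
      congr 2
      split_ifs <;> omega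
    · rw [sproutDists_append_cons_of_lt _ _ (by omega), dists, ihr (by omega),
        ldepth_sprout (by omega)]
      simp only [List.append_assoc, List.singleton_append]
      rw [show p - l.dists.length - 1 = p - l.numLeaves by omega]
      congr 2
      split_ifs <;> omega

theorem eq_leaf_of_rdepth_add_ldepth_eq_zero {l r : BTree} (h : l.rdepth + r.ldepth = 0) :
    l = leaf ∧ r = leaf := by
  cases l <;> cases r <;> simp_all [rdepth, ldepth]

theorem exists_sprout_eq_of_getElem?_dists_eq_two {t : BTree} {p : ℕ}
    (h : t.dists[p]? = some 2) : ∃ t' : BTree, p < t'.numLeaves ∧ t'.sprout p = t := by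
  induction t generalizing p with
  | leaf => simp [dists] at h
  | node l r ihl ihr =>
    have hl := l.length_dists_add_one
    simp only [dists, List.append_assoc, List.singleton_append] at h
    rcases lt_trichotomy p l.dists.length with hp | rfl | hp
    · rw [List.getElem?_append_left hp] at h
      obtain ⟨l', hpl', rfl⟩ := ihl h
      exact ⟨node l' r, by simp [numLeaves]; omega, by simp [sprout, hpl']⟩
    · simp only [List.getElem?_append_right le_rfl, Nat.sub_self, List.getElem?_cons_zero,
        Option.some.injEq, Nat.add_eq_right] at h
      obtain ⟨rfl, rfl⟩ := eq_leaf_of_rdepth_add_ldepth_eq_zero h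
      exact ⟨leaf, by simp [numLeaves, dists], rfl⟩
    · rw [List.getElem?_append_right hp.le, List.getElem?_cons] at h
      rw [if_neg (by omega)] at h
      obtain ⟨r', hpr', hr'⟩ := ihr h
      refine ⟨node l r', by simp [numLeaves]; omega, ?_⟩
      simp only [sprout, if_neg (show ¬p < l.numLeaves by omega)]
      rw [show p - l.numLeaves = p - l.dists.length - 1 by omega, hr']

end BTree

/-- An ordered rooted binary tree with unit edge lengths is uniquely determined by its
sequence of consecutive leaf-to-leaf distances. -/
theorem btree_determined_by_consecutive_leaf_distances (s t : BTree)
    (h : s.dists = t.dists) : s = t := by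
  induction hn : s.numLeaves using Nat.strong_induction_on generalizing s t with
  | _ n ih =>
    by_cases hs : s = .leaf
    · subst hs
      exact (BTree.dists_eq_nil_iff.1 h.symm).symm
    obtain ⟨p, hp⟩ := List.mem_iff_getElem?.1 (BTree.two_mem_dists hs)
    obtain ⟨s', hs', rfl⟩ := BTree.exists_sprout_eq_of_getElem?_dists_eq_two hp
    obtain ⟨t', ht', rfl⟩ := BTree.exists_sprout_eq_of_getElem?_dists_eq_two (h ▸ hp)
    rw [BTree.dists_sprout hs', BTree.dists_sprout ht'] at h
    have hlt : s'.numLeaves < n := by rw [← hn, BTree.numLeaves_sprout]; omega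
    rw [ih _ hlt s' t' (sproutDists_injective p h) rfl]
end
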